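/- For any symmetric positive semidefinite n×n matrix W, θ ∈ ℝ, s > 0, and any function γ : ℝ → ℝ, setting Γ = γ applied to W via the spectral calculus, the quantity 1 − 2θ·n⁻¹tr(ΓW) + θ²·n⁻¹tr(WΓ²W) + s·n⁻¹tr(Γ²W) is at least n⁻¹ Σᵢ s/(s + θ²λᵢ), where λᵢ are the eigenvalues of W. -/

import Mathlib

/-!
Conjugating by the eigenvector unitary of `W` turns `Γ` into `cfc γ W`, so `ΓW`, `WΓ²W` and
`Γ²W` are `cfc` of scalar functions of `W` and their traces are sums over the eigenvalues.
The inequality then holds eigenvalue by eigenvalue: for fixed `λ ≥ 0` the right-hand side is a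
quadratic in `g = γ λ` whose minimum, attained at `g = θ / (s + θ²λ)`, is `s / (s + θ²λ)`.
-/

open Matrix

namespace Matrix.IsHermitian

variable {n 𝕜 : Type*} [RCLike 𝕜] [Fintype n] [DecidableEq n] {A : Matrix n n 𝕜}

lemma eigenvectorUnitary_mul_diagonal_mul_star (hA : A.IsHermitian) (f : ℝ → ℝ) :
    (hA.eigenvectorUnitary : Matrix n n 𝕜) * diagonal (fun i => (f (hA.eigenvalues i) : 𝕜)) *
      star (hA.eigenvectorUnitary : Matrix n n 𝕜) = cfc f A := by
  rw [hA.cfc_eq, IsHermitian.cfc, Unitary.conjStarAlgAut_apply]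
  rfl

lemma trace_cfc (hA : A.IsHermitian) (f : ℝ → ℝ) :
    (cfc f A).trace = ∑ i, (f (hA.eigenvalues i) : 𝕜) := by
  rw [← hA.eigenvectorUnitary_mul_diagonal_mul_star, trace_mul_cycle,
    Unitary.coe_star_mul_self, one_mul, trace_diagonal]

end Matrix.IsHermitian

/-- Completing the square: `(s + θ²l) · rhs - s = l (θ - g (s + θ²l))²`. -/
lemma risk_ge_optimal_scalar {θ s l : ℝ} (hs : 0 < s) (hl : 0 ≤ l) (g : ℝ) :
    s / (s + θ ^ 2 * l) ≤ 1 - 2 * θ * (g * l) + θ ^ 2 * (l * g ^ 2 * l) + s * (g ^ 2 * l) := by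
  rw [div_le_iff₀ (by positivity)]
  have h : (1 - 2 * θ * (g * l) + θ ^ 2 * (l * g ^ 2 * l) + s * (g ^ 2 * l)) * (s + θ ^ 2 * l)
      - s = l * (θ - g * (s + θ ^ 2 * l)) ^ 2 := by ring
  linarith [mul_nonneg hl (sq_nonneg (θ - g * (s + θ ^ 2 * l)))]

theorem risk_ge_optimal_on_spectrum_general (n : ℕ)
    (W : Matrix (Fin n) (Fin n) ℝ) (hW : W.PosSemidef)
    (θ s : ℝ) (hs : 0 < s) (γ : ℝ → ℝ)
    (Γ : Matrix (Fin n) (Fin n) ℝ)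
    (hΓ : Γ = (hW.1.eigenvectorUnitary : Matrix (Fin n) (Fin n) ℝ) *
        diagonal (fun i => γ (hW.1.eigenvalues i)) *
        star (hW.1.eigenvectorUnitary : Matrix (Fin n) (Fin n) ℝ)) :
    (n : ℝ)⁻¹ * ∑ i, s / (s + θ ^ 2 * hW.1.eigenvalues i) ≤
      1 - 2 * θ * ((n : ℝ)⁻¹ * (Γ * W).trace)
        + θ ^ 2 * ((n : ℝ)⁻¹ * (W * Γ ^ 2 * W).trace)
        + s * ((n : ℝ)⁻¹ * (Γ ^ 2 * W).trace) := by
  have hWsa : IsSelfAdjoint W := hW.1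
  have hcont (f : ℝ → ℝ) : ContinuousOn f (spectrum ℝ W) := W.finite_spectrum.continuousOn f
  obtain rfl : Γ = cfc γ W := hΓ.trans (hW.1.eigenvectorUnitary_mul_diagonal_mul_star γ)
  have hΓW : cfc γ W * W = cfc (fun x => γ x * x) W := by
    rw [cfc_mul γ (fun x => x) W (hcont _) (hcont _), cfc_id' ℝ W]
  have hWΓ2W : W * cfc γ W ^ 2 * W = cfc (fun x => x * γ x ^ 2 * x) W := by
    rw [cfc_mul (fun x => x * γ x ^ 2) (fun x => x) W (hcont _) (hcont _),
      cfc_mul (fun x => x) (fun x => γ x ^ 2) W (hcont _) (hcont _), cfc_pow γ 2 W (hcont _),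
      cfc_id' ℝ W]
  have hΓ2W : cfc γ W ^ 2 * W = cfc (fun x => γ x ^ 2 * x) W := by
    rw [cfc_mul (fun x => γ x ^ 2) (fun x => x) W (hcont _) (hcont _), cfc_pow γ 2 W (hcont _),
      cfc_id' ℝ W]
  simp only [hΓW, hWΓ2W, hΓ2W, hW.1.trace_cfc, RCLike.ofReal_real_eq_id, id]
  set l := hW.1.eigenvalues
  calc (n : ℝ)⁻¹ * ∑ i, s / (s + θ ^ 2 * l i)
      ≤ (n : ℝ)⁻¹ * ∑ i, (1 - 2 * θ * (γ (l i) * l i) + θ ^ 2 * (l i * γ (l i) ^ 2 * l i)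
          + s * (γ (l i) ^ 2 * l i)) := by
        gcongr with i
        exact risk_ge_optimal_scalar hs (hW.eigenvalues_nonneg i) _
    _ = (n : ℝ)⁻¹ * n - 2 * θ * ((n : ℝ)⁻¹ * ∑ i, γ (l i) * l i)
          + θ ^ 2 * ((n : ℝ)⁻¹ * ∑ i, l i * γ (l i) ^ 2 * l i)
          + s * ((n : ℝ)⁻¹ * ∑ i, γ (l i) ^ 2 * l i) := by
        simp only [Finset.sum_add_distrib, Finset.sum_sub_distrib, ← Finset.mul_sum,
          Finset.sum_const, Finset.card_univ, Fintype.card_fin, nsmul_eq_mul, mul_one]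
        ring
    _ ≤ _ := by
        gcongr
        exact inv_mul_le_one_of_le₀ le_rfl n.cast_nonneg

/-- For a symmetric PSD matrix `W` with spectral decomposition, `θ ∈ ℝ`, `s > 0` and any
spectral function `Γ = γ(W)`, the risk expression
`1 − 2θ n⁻¹tr(ΓW) + θ² n⁻¹tr(WΓ²W) + s n⁻¹tr(Γ²W)` is at least
`n⁻¹ Σᵢ s/(s + θ²λᵢ)`. -/
theorem risk_ge_optimal_on_spectrum (n : ℕ) (hn : 0 < n)
    (W : Matrix (Fin n) (Fin n) ℝ) (hW : W.PosSemidef)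
    (θ s : ℝ) (hs : 0 < s) (γ : ℝ → ℝ)
    (Γ : Matrix (Fin n) (Fin n) ℝ)
    (hΓ : Γ = (hW.1.eigenvectorUnitary : Matrix (Fin n) (Fin n) ℝ) *
        diagonal (fun i => γ (hW.1.eigenvalues i)) *
        star (hW.1.eigenvectorUnitary : Matrix (Fin n) (Fin n) ℝ)) :
    (n : ℝ)⁻¹ * ∑ i, s / (s + θ ^ 2 * hW.1.eigenvalues i) ≤
      1 - 2 * θ * ((n : ℝ)⁻¹ * (Γ * W).trace)
        + θ ^ 2 * ((n : ℝ)⁻¹ * (W * Γ ^ 2 * W).trace)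
        + s * ((n : ℝ)⁻¹ * (Γ ^ 2 * W).trace) :=
  risk_ge_optimal_on_spectrum_general n W hW θ s hs γ Γ hΓ
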